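/- Let S be a finite subset of Z^2 and let K(x,y;t) = 1 - t sum_{(i,j) in S} x^i y^j. Let B(x;t) in R[x,x^{-1}][[t]] be the generating function for bilateral walks with steps in S (it satisfies B(x;0)=1), and let (B_0(t), B_+(x;t), B_-(x^{-1};t)) be its canonical factorization. Let L(t), S_0(x;t) and S(x,y;t) be the generating functions for loops, bilateral walks on the slit plane, and all walks on the slit plane, respectively. Then L(t) = B_0(t), S_0(x;t) = B_+(x;t), and K(x,y;t) * S(x,y;t) * B_0(t) * B_-(x^{-1};t) = 1 in R[x,x^{-1},y,y^{-1}][[t]]. -/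

import Mathlib

open scoped Classical
open PowerSeries

namespace SlitPlane

/-- A point (or step) of the lattice `ℤ²`. -/
abbrev Pt := ℤ × ℤ

/-- All steps of the walk `l` belong to `S`.  A walk is identified with its
list of steps; it starts at the origin. -/
def StepsIn (S : Finset Pt) (l : List Pt) : Prop := ∀ s ∈ l, s ∈ S

/-- The vertex `w_i` of the walk reached after `i` steps. -/
def vert (l : List Pt) (i : ℕ) : Pt := (l.take i).sum

/-- Membership in the half-line `H = {(k,0) : k ≤ 0}`. -/
def OnH (p : Pt) : Prop := p.2 = 0 ∧ p.1 ≤ 0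

/-- Membership in the half-line `{(k,0) : k < 0}`. -/
def OnNegAxis (p : Pt) : Prop := p.2 = 0 ∧ p.1 < 0

/-- A walk on the slit plane: none of the vertices `w_1, ..., w_n` lies on `H`. -/
def AvoidsH (l : List Pt) : Prop := ∀ i, 1 ≤ i → i ≤ l.length → ¬ OnH (vert l i)

/-- Number of walks of length `n` on the slit plane, with steps in `S`, ending at `e`. -/
noncomputable def slitCount (S : Finset Pt) (n : ℕ) (e : Pt) : ℕ :=
  Set.ncard {l : List Pt | l.length = n ∧ StepsIn S l ∧ AvoidsH l ∧ l.sum = e}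

/-- Number of (unconstrained) walks of length `n` with steps in `S` ending at `e`. -/
noncomputable def walkCount (S : Finset Pt) (n : ℕ) (e : Pt) : ℕ :=
  Set.ncard {l : List Pt | l.length = n ∧ StepsIn S l ∧ l.sum = e}

/-- Number of loops of length `n` with steps in `S`: walks ending at the origin,
none of whose vertices lies on `{(k,0) : k < 0}`. -/
noncomputable def loopCount (S : Finset Pt) (n : ℕ) : ℕ :=
  Set.ncard {l : List Pt | l.length = n ∧ StepsIn S l ∧
    (∀ i ≤ l.length, ¬ OnNegAxis (vert l i)) ∧ l.sum = (0, 0)}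

end SlitPlane

namespace SlitPlane

/-- The Laurent polynomial ring `ℝ[x, x⁻¹]`. -/
abbrev E1 := AddMonoidAlgebra ℝ ℤ

/-- The Laurent polynomial ring `ℝ[x, x⁻¹, y, y⁻¹]`: monomial `(i,j)` is `x^i y^j`. -/
abbrev E2 := AddMonoidAlgebra ℝ (ℤ × ℤ)

/-- The embedding `ℝ[x,x⁻¹] → ℝ[x,x⁻¹,y,y⁻¹]`. -/
noncomputable def iotaX : E1 →+* E2 :=
  AddMonoidAlgebra.mapDomainRingHom ℝ (AddMonoidHom.inl ℤ ℤ)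

/-- The polynomial `K(x,y;t) = 1 - t ∑_{(i,j) ∈ S} x^i y^j`, as a power series in `t`. -/
noncomputable def Kpoly (S : Finset Pt) : PowerSeries E2 :=
  1 - PowerSeries.X * PowerSeries.C (R := E2) (∑ s ∈ S, AddMonoidAlgebra.single s (1 : ℝ))

/-- `(B₀, B₊, B₋)` is a canonical factorization of `B`. -/
def IsCanonicalFactorization (B : PowerSeries E1)
    (B0 : PowerSeries ℝ) (Bp Bm : PowerSeries E1) : Prop :=
  B = PowerSeries.map (algebraMap ℝ E1) B0 * Bp * Bm ∧
  (∀ (n : ℕ) (i : ℤ), i < 0 → (PowerSeries.coeff (R := E1) n Bp).coeff i = 0) ∧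
  (∀ (n : ℕ) (i : ℤ), 0 < i → (PowerSeries.coeff (R := E1) n Bm).coeff i = 0) ∧
  PowerSeries.coeff (R := ℝ) 0 B0 = 1 ∧
  PowerSeries.coeff (R := E1) 0 Bp = 1 ∧
  PowerSeries.coeff (R := E1) 0 Bm = 1 ∧
  (∀ n : ℕ, 1 ≤ n → (PowerSeries.coeff (R := E1) n Bp).coeff 0 = 0) ∧
  (∀ n : ℕ, 1 ≤ n → (PowerSeries.coeff (R := E1) n Bm).coeff 0 = 0)

/-!
Every walk factors uniquely as `p ++ c ++ q`: `p` ends at the first of the leftmost vertices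
the walk has on the `x`-axis, `c` runs from there to the last return to that vertex (a translated
loop), and `q` then stays in the translated slit plane. Hence the generating functions of the
three classes multiply to that of all walks, `1 / K`. The bilateral walks factor in the same way,
so `B = L · S₀ · P`, and the three factors are supported on `x⁰`, positive and negative powers
of `x` respectively, which is what makes a canonical factorization unique.
-/

section Factorization

variable {R : Type*} [CommRing R]

def IsNormalizedIn (V : AddSubgroup R) (A : R⟦X⟧) : Prop :=
  constantCoeff A = 1 ∧ ∀ n, 0 < n → coeff n A ∈ V

theorem IsNormalizedIn.coeff_sub_mem {V : AddSubgroup R} {A A' : R⟦X⟧}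
    (hA : IsNormalizedIn V A) (hA' : IsNormalizedIn V A') (n : ℕ) : coeff n (A - A') ∈ V := by
  rcases n.eq_zero_or_pos with rfl | hn
  · simp [hA.1, hA'.1]
  · rw [map_sub]
    exact sub_mem (hA.2 n hn) (hA'.2 n hn)

theorem coeff_mul_eq_of_X_pow_dvd {n : ℕ} {d P : R⟦X⟧} (hd : X ^ n ∣ d)
    (hP : constantCoeff P = 1) : coeff n (d * P) = coeff n d := by
  obtain ⟨e, rfl⟩ := hd
  simp [mul_assoc, coeff_X_pow_mul', hP]

theorem X_pow_succ_dvd_of_coeff_eq_zero {n : ℕ} {d : R⟦X⟧} (hd : X ^ n ∣ d)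
    (hn : coeff n d = 0) : X ^ (n + 1) ∣ d := by
  rw [X_pow_dvd_iff] at hd ⊢
  intro m hm
  rcases Nat.lt_succ_iff_lt_or_eq.1 hm with hm | rfl
  exacts [hd m hm, hn]

theorem eq_of_forall_X_pow_dvd_sub {A A' : R⟦X⟧} (h : ∀ n, X ^ n ∣ A - A') : A = A' :=
  sub_eq_zero.1 <| ext fun n => by
    simpa using X_pow_dvd_iff.1 (h (n + 1)) n n.lt_succ_self

theorem eq_of_mul_mul_eq {U V W : AddSubgroup R}
    (hindep : ∀ a ∈ U, ∀ b ∈ V, ∀ c ∈ W, a + b + c = 0 → a = 0 ∧ b = 0 ∧ c = 0)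
    {A B C A' B' C' : R⟦X⟧}
    (hA : IsNormalizedIn U A) (hB : IsNormalizedIn V B) (hC : IsNormalizedIn W C)
    (hA' : IsNormalizedIn U A') (hB' : IsNormalizedIn V B') (hC' : IsNormalizedIn W C')
    (h : A * B * C = A' * B' * C') : A = A' ∧ B = B' ∧ C = C' := by
  have key : ∀ n, X ^ n ∣ A - A' ∧ X ^ n ∣ B - B' ∧ X ^ n ∣ C - C' := by
    intro n
    induction n with
    | zero => simp
    | succ n ih =>
      obtain ⟨dA, dB, dC⟩ := ih
      -- once the factors agree modulo `X ^ n`, the products differ modulo `X ^ (n + 1)` only by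
      -- the sum of the differences of the `n`-th coefficients
      have hexp : A * B * C - A' * B' * C' = (A - A') * (B * C)
          + (B - B') * (A' * C) + (C - C') * (A' * B') := by ring
      have hsum : coeff n (A - A') + coeff n (B - B') + coeff n (C - C') = 0 := by
        have := congrArg (coeff n) hexp
        rwa [h, sub_self, map_zero, map_add, map_add,
          coeff_mul_eq_of_X_pow_dvd dA (by simp [hB.1, hC.1]),
          coeff_mul_eq_of_X_pow_dvd dB (by simp [hA'.1, hC.1]),
          coeff_mul_eq_of_X_pow_dvd dC (by simp [hA'.1, hB'.1]), eq_comm] at this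
      obtain ⟨zA, zB, zC⟩ := hindep _ (hA.coeff_sub_mem hA' n) _ (hB.coeff_sub_mem hB' n) _
        (hC.coeff_sub_mem hC' n) hsum
      exact ⟨X_pow_succ_dvd_of_coeff_eq_zero dA zA, X_pow_succ_dvd_of_coeff_eq_zero dB zB,
        X_pow_succ_dvd_of_coeff_eq_zero dC zC⟩
  exact ⟨eq_of_forall_X_pow_dvd_sub fun n => (key n).1,
    eq_of_forall_X_pow_dvd_sub fun n => (key n).2.1,
    eq_of_forall_X_pow_dvd_sub fun n => (key n).2.2⟩

end Factorization

open AddMonoidAlgebra in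
theorem eq_zero_of_add_add_eq_zero_of_supported {a b c : E1}
    (ha : a ∈ supported ℝ ℝ {0}) (hb : b ∈ supported ℝ ℝ (Set.Ioi 0))
    (hc : c ∈ supported ℝ ℝ (Set.Iio 0)) (h : a + b + c = 0) : a = 0 ∧ b = 0 ∧ c = 0 := by
  rw [mem_supported'] at ha hb hc
  have hcoeff : ∀ e, a.coeff e = 0 ∧ b.coeff e = 0 ∧ c.coeff e = 0 := by
    intro e
    have hsum : a.coeff e + b.coeff e + c.coeff e = 0 := by
      simpa using congrArg (fun x : E1 => x.coeff e) h
    rcases lt_trichotomy e 0 with he | rfl | he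
    · have := ha e he.ne
      have := hb e (not_lt.2 he.le)
      refine ⟨?_, ?_, ?_⟩ <;> linarith
    · have := hb 0 (lt_irrefl (0 : ℤ))
      have := hc 0 (lt_irrefl (0 : ℤ))
      refine ⟨?_, ?_, ?_⟩ <;> linarith
    · have := ha e he.ne'
      have := hc e (not_lt.2 he.le)
      refine ⟨?_, ?_, ?_⟩ <;> linarith
  refine ⟨?_, ?_, ?_⟩ <;> ext e <;> simp [hcoeff e]

open AddMonoidAlgebra in
theorem IsCanonicalFactorization.isNormalizedIn {B Bp Bm : PowerSeries E1} {B0 : PowerSeries ℝ}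
    (h : IsCanonicalFactorization B B0 Bp Bm) :
    IsNormalizedIn (supported ℝ ℝ {0}).toAddSubgroup (map (algebraMap ℝ E1) B0) ∧
    IsNormalizedIn (supported ℝ ℝ (Set.Ioi 0)).toAddSubgroup Bp ∧
    IsNormalizedIn (supported ℝ ℝ (Set.Iio 0)).toAddSubgroup Bm := by
  obtain ⟨-, hp, hm, h0c, hpc, hmc, hp0, hm0⟩ := h
  refine ⟨⟨by simp [← coeff_zero_eq_constantCoeff_apply, h0c], fun n _ => ?_⟩,
    ⟨by rw [← coeff_zero_eq_constantCoeff_apply, hpc], fun n hn => ?_⟩,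
    ⟨by rw [← coeff_zero_eq_constantCoeff_apply, hmc], fun n hn => ?_⟩⟩ <;>
    simp only [Submodule.mem_toAddSubgroup, mem_supported', Set.mem_singleton_iff, Set.mem_Ioi,
      Set.mem_Iio, not_lt]
  · intro i hi
    simp [PowerSeries.coeff_map, AddMonoidAlgebra.coe_algebraMap, hi]
  · intro i hi
    rcases hi.lt_or_eq with hi | rfl
    exacts [hp n i hi, hp0 n hn]
  · intro i hi
    rcases hi.lt_or_eq with hi | rfl
    exacts [hm n i hi, hm0 n hn]

theorem IsCanonicalFactorization.unique {B Bp Bm Bp' Bm' : PowerSeries E1}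
    {B0 B0' : PowerSeries ℝ} (h : IsCanonicalFactorization B B0 Bp Bm)
    (h' : IsCanonicalFactorization B B0' Bp' Bm') : B0 = B0' ∧ Bp = Bp' ∧ Bm = Bm' := by
  obtain ⟨hA, hB, hC⟩ := h.isNormalizedIn
  obtain ⟨hA', hB', hC'⟩ := h'.isNormalizedIn
  obtain ⟨h0, hp, hm⟩ := eq_of_mul_mul_eq
    (fun a ha b hb c hc => eq_zero_of_add_add_eq_zero_of_supported ha hb hc)
    hA hB hC hA' hB' hC' (h.1.symm.trans h'.1)
  exact ⟨map_injective _ (algebraMap ℝ E1).injective h0, hp, hm⟩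

theorem vert_zero (l : List Pt) : vert l 0 = 0 := rfl

theorem vert_length (l : List Pt) : vert l l.length = l.sum := by
  simp [vert]

theorem vert_take (l : List Pt) (k i : ℕ) : vert (l.take k) i = vert l (min i k) := by
  simp [vert, List.take_take]

theorem vert_add (l : List Pt) (k i : ℕ) : vert l (k + i) = vert l k + vert (l.drop k) i := by
  rw [vert, vert, vert, List.take_add, List.sum_append]

theorem vert_drop (l : List Pt) (k i : ℕ) : vert (l.drop k) i = vert l (k + i) - vert l k := by
  rw [vert_add, add_sub_cancel_left]

theorem vert_append_of_le {p q : List Pt} {i : ℕ} (h : i ≤ p.length) :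
    vert (p ++ q) i = vert p i := by
  simp [vert, List.take_append_of_le_length h]

theorem vert_append_length (p q : List Pt) : vert (p ++ q) p.length = p.sum := by
  rw [vert_append_of_le le_rfl, vert_length]

theorem vert_append_length_add (p q : List Pt) (i : ℕ) :
    vert (p ++ q) (p.length + i) = p.sum + vert q i := by
  rw [vert_add, List.drop_left, vert_append_length]

def IsBilateral (l : List Pt) : Prop := l.sum.2 = 0

def AvoidsNegAxis (l : List Pt) : Prop := ∀ i ≤ l.length, ¬ OnNegAxis (vert l i)

def IsLoop (l : List Pt) : Prop := AvoidsNegAxis l ∧ l.sum = (0, 0)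

def EndsStrictlyLeftmost (l : List Pt) : Prop :=
  IsBilateral l ∧ ∀ i < l.length, (vert l i).2 = 0 → l.sum.1 < (vert l i).1

theorem IsLoop.isBilateral {l : List Pt} (h : IsLoop l) : IsBilateral l := by
  simp [IsBilateral, h.2]

theorem isBilateral_append_iff {p : List Pt} (hp : IsBilateral p) (q : List Pt) :
    IsBilateral (p ++ q) ↔ IsBilateral q := by
  rw [IsBilateral, IsBilateral, List.sum_append, Prod.snd_add, show p.sum.2 = 0 from hp, zero_add]

theorem EndsStrictlyLeftmost.sum_fst_neg {l : List Pt} (h : EndsStrictlyLeftmost l)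
    (hl : l ≠ []) : l.sum.1 < 0 :=
  h.2 0 (List.length_pos_iff.2 hl) rfl

theorem AvoidsH.sum_fst_pos {l : List Pt} (h : AvoidsH l) (hb : IsBilateral l) (hl : l ≠ []) :
    0 < l.sum.1 := by
  have := h l.length (List.length_pos_iff.2 hl) le_rfl
  rw [vert_length, OnH] at this
  push Not at this
  exact this hb

structure IsUniqueConcat {α : Type*} (Φ Φ₁ Φ₂ : List α → Prop) : Prop where
  iff_exists : ∀ l, Φ l ↔ ∃ p q, Φ₁ p ∧ Φ₂ q ∧ p ++ q = l
  left_unique : ∀ ⦃p q p' q'⦄, Φ₁ p → Φ₂ q → Φ₁ p' → Φ₂ q' → p ++ q = p' ++ q' → p = p'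

theorem left_unique_of_overlap {α : Type*} {Φ₁ Φ₂ : List α → Prop}
    (h : ∀ p m q, Φ₁ p → Φ₁ (p ++ m) → Φ₂ (m ++ q) → m = []) :
    ∀ ⦃p q p' q'⦄, Φ₁ p → Φ₂ q → Φ₁ p' → Φ₂ q' → p ++ q = p' ++ q' → p = p' := by
  intro p q p' q' hp hq hp' hq' heq
  rcases List.append_eq_append_iff.1 heq with ⟨m, rfl, rfl⟩ | ⟨m, rfl, rfl⟩
  · simp [h p m q' hp hp' hq]
  · simp [h p' m q hp' hp hq']

theorem IsUniqueConcat.and {α : Type*} {Φ Φ₁ Φ₂ ψ : List α → Prop}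
    (h : IsUniqueConcat Φ Φ₁ Φ₂) (hψ : ∀ p q, Φ₁ p → (ψ (p ++ q) ↔ ψ q)) :
    IsUniqueConcat (fun l => Φ l ∧ ψ l) Φ₁ (fun q => Φ₂ q ∧ ψ q) where
  iff_exists l := by
    rw [h.iff_exists]
    constructor
    · rintro ⟨⟨p, q, hp, hq, rfl⟩, hl⟩
      exact ⟨p, q, hp, ⟨hq, (hψ p q hp).1 hl⟩, rfl⟩
    · rintro ⟨p, q, hp, ⟨hq, hψq⟩, rfl⟩
      exact ⟨⟨p, q, hp, hq, rfl⟩, (hψ p q hp).2 hψq⟩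
  left_unique _ _ _ _ hp hq hp' hq' := h.left_unique hp hq.1 hp' hq'.1

theorem exists_leftmost_split (l : List Pt) :
    ∃ p q, EndsStrictlyLeftmost p ∧ AvoidsNegAxis q ∧ p ++ q = l := by
  -- cut at the first of the leftmost vertices on the `x`-axis
  set T := (Finset.range (l.length + 1)).filter fun i => (vert l i).2 = 0
  have hT : ∀ {i}, i ∈ T ↔ i ≤ l.length ∧ (vert l i).2 = 0 := by
    simp [T]
  obtain ⟨k, hkT, hk⟩ := T.exists_min_image (fun i => toLex ((vert l i).1, i))
    ⟨0, hT.2 ⟨Nat.zero_le _, rfl⟩⟩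
  obtain ⟨hkn, hk2⟩ := hT.1 hkT
  have hmin : ∀ i ≤ l.length, (vert l i).2 = 0 →
      (vert l k).1 < (vert l i).1 ∨ (vert l k).1 = (vert l i).1 ∧ k ≤ i :=
    fun i hi h2 => Prod.Lex.le_iff.1 (hk i (hT.2 ⟨hi, h2⟩))
  refine ⟨l.take k, l.drop k, ⟨hk2, fun i hi h2 => ?_⟩, fun i hi ⟨h2, h1⟩ => ?_,
    List.take_append_drop k l⟩
  · rw [List.length_take, lt_min_iff] at hi
    rw [vert_take, min_eq_left hi.1.le] at h2 ⊢
    rcases hmin i (by omega) h2 with h | ⟨-, h⟩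
    exacts [h, absurd h (not_le.2 hi.1)]
  · rw [List.length_drop] at hi
    rw [vert_drop, Prod.snd_sub, hk2, sub_zero] at h2
    rw [vert_drop, Prod.fst_sub] at h1
    rcases hmin (k + i) (by omega) h2 with h | ⟨h, -⟩ <;> linarith

theorem exists_loop_split {l : List Pt} (hl : AvoidsNegAxis l) :
    ∃ p q, IsLoop p ∧ AvoidsH q ∧ p ++ q = l := by
  -- cut at the last visit to the origin
  set T := (Finset.range (l.length + 1)).filter fun i => vert l i = 0
  have hT : ∀ {i}, i ∈ T ↔ i ≤ l.length ∧ vert l i = 0 := by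
    simp [T]
  obtain ⟨k, hkT, hk⟩ := T.exists_max_image id ⟨0, hT.2 ⟨Nat.zero_le _, rfl⟩⟩
  obtain ⟨hkn, hk0⟩ := hT.1 hkT
  refine ⟨l.take k, l.drop k, ⟨fun i hi => ?_, hk0⟩, fun i hi1 hi2 ⟨hy, hx⟩ => ?_,
    List.take_append_drop k l⟩
  · rw [List.length_take, le_min_iff] at hi
    rw [vert_take, min_eq_left hi.1]
    exact hl i hi.2
  · rw [List.length_drop] at hi2
    rw [vert_drop, hk0, sub_zero] at hy hx
    have hx0 : (vert l (k + i)).1 = 0 :=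
      le_antisymm hx (not_lt.1 fun h => hl _ (by omega) ⟨hy, h⟩)
    have := hk (k + i) (hT.2 ⟨by omega, Prod.ext hx0 hy⟩)
    simp only [id] at this
    omega

theorem IsLoop.avoidsNegAxis_append {p q : List Pt} (hp : IsLoop p) (hq : AvoidsH q) :
    AvoidsNegAxis (p ++ q) := by
  intro i hi
  rcases le_or_gt i p.length with h | h
  · rw [vert_append_of_le h]
    exact hp.1 i h
  · obtain ⟨j, rfl⟩ := Nat.exists_eq_add_of_lt h
    rw [add_assoc, vert_append_length_add, hp.2, Prod.mk_zero_zero, zero_add]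
    rw [List.length_append] at hi
    exact fun hn => hq (j + 1) (by omega) (by omega) ⟨hn.1, hn.2.le⟩

theorem isUniqueConcat_leftmost :
    IsUniqueConcat (fun _ => True) EndsStrictlyLeftmost AvoidsNegAxis where
  iff_exists l := iff_of_true trivial (exists_leftmost_split l)
  left_unique := left_unique_of_overlap fun p m q hp hpm hmq => by
    by_contra hm
    have hlt := hpm.2 p.length (by simpa using List.length_pos_iff.2 hm)
      (by rw [vert_append_length]; exact hp.1)
    have h2 := hpm.1
    simp only [IsBilateral, vert_append_length, List.sum_append, Prod.fst_add, Prod.snd_add,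
      show p.sum.2 = 0 from hp.1, zero_add] at hlt h2
    exact hmq m.length (by simp) (by rw [vert_append_length]; exact ⟨h2, by linarith⟩)

theorem isUniqueConcat_loop : IsUniqueConcat AvoidsNegAxis IsLoop AvoidsH where
  iff_exists l := ⟨exists_loop_split, fun ⟨_, _, hp, hq, hl⟩ => hl ▸ hp.avoidsNegAxis_append hq⟩
  left_unique := left_unique_of_overlap fun p m q hp hpm hmq => by
    by_contra hm
    have hsum : m.sum = 0 := by simpa [List.sum_append, hp.2] using hpm.2
    exact hmq m.length (List.length_pos_iff.2 hm) (by simp) (by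
      rw [vert_append_length, hsum]; exact ⟨rfl, le_rfl⟩)

def walksOfLength (S : Finset Pt) : ℕ → Finset (List Pt)
  | 0 => {[]}
  | n + 1 => (S ×ˢ walksOfLength S n).image fun x => x.1 :: x.2

theorem mem_walksOfLength {S : Finset Pt} {n : ℕ} {l : List Pt} :
    l ∈ walksOfLength S n ↔ l.length = n ∧ StepsIn S l := by
  induction n generalizing l with
  | zero =>
    simp only [walksOfLength, Finset.mem_singleton, List.length_eq_zero_iff, iff_self_and]
    rintro rfl s hs
    simp at hs
  | succ n ih =>
    cases l with
    | nil => simp [walksOfLength]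
    | cons s l => simp [walksOfLength, ih, StepsIn, and_left_comm]

theorem stepsIn_append {S : Finset Pt} {p q : List Pt} :
    StepsIn S (p ++ q) ↔ StepsIn S p ∧ StepsIn S q :=
  List.forall_mem_append

theorem ncard_walks_eq_card (S : Finset Pt) (n : ℕ) (Φ : List Pt → Prop) :
    {l : List Pt | l.length = n ∧ StepsIn S l ∧ Φ l}.ncard
      = ((walksOfLength S n).filter Φ).card := by
  rw [← Set.ncard_coe_finset]
  congr 1
  ext l
  simp [mem_walksOfLength, and_assoc]

section GeneratingFunctions

variable {G H : Type*} [AddCommMonoid G] [AddCommMonoid H]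

noncomputable def walkGF (S : Finset Pt) (f : Pt →+ G) (Φ : List Pt → Prop) :
    PowerSeries (AddMonoidAlgebra ℝ G) :=
  mk fun n => ∑ l ∈ (walksOfLength S n).filter Φ, AddMonoidAlgebra.single (f l.sum) 1

theorem coeff_coeff_walkGF (S : Finset Pt) (f : Pt →+ G) (Φ : List Pt → Prop) (n : ℕ) (e : G) :
    (coeff n (walkGF S f Φ)).coeff e
      = ({l : List Pt | l.length = n ∧ StepsIn S l ∧ Φ l ∧ f l.sum = e}.ncard : ℝ) := by
  rw [ncard_walks_eq_card]
  simp [walkGF, Finsupp.single_apply, Finset.sum_boole, Finset.filter_filter]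
  convert rfl

theorem coeff_coeff_walkGF_eq_zero {S : Finset Pt} {f : Pt →+ G} {Φ : List Pt → Prop} {n : ℕ}
    {e : G} (he : ∀ l, Φ l → l.length = n → f l.sum ≠ e) :
    (coeff n (walkGF S f Φ)).coeff e = 0 := by
  simp only [walkGF, coeff_mk, AddMonoidAlgebra.coeff_sum, AddMonoidAlgebra.coeff_single,
    Finsupp.coe_finsetSum, Finset.sum_apply]
  refine Finset.sum_eq_zero fun l hl => Finsupp.single_eq_of_ne ?_
  rw [Finset.mem_filter, mem_walksOfLength] at hl
  exact (he l hl.2 hl.1.1).symm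

theorem coeff_zero_walkGF (S : Finset Pt) (f : Pt →+ G) {Φ : List Pt → Prop} (h : Φ []) :
    coeff 0 (walkGF S f Φ) = 1 := by
  simp [walkGF, walksOfLength, Finset.filter_singleton, h, AddMonoidAlgebra.one_def]

theorem walkGF_congr {S : Finset Pt} {f f' : Pt →+ G} {Φ : List Pt → Prop}
    (h : ∀ l, Φ l → f l.sum = f' l.sum) : walkGF S f Φ = walkGF S f' Φ := by
  ext n : 1
  simp only [walkGF, coeff_mk]
  exact Finset.sum_congr rfl fun l hl => by rw [h l (Finset.mem_filter.1 hl).2]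

theorem map_walkGF (S : Finset Pt) (f : Pt →+ G) (g : G →+ H) (Φ : List Pt → Prop) :
    map (AddMonoidAlgebra.mapDomainRingHom ℝ g) (walkGF S f Φ) = walkGF S (g.comp f) Φ := by
  ext n : 1
  simp [walkGF, AddMonoidAlgebra.mapDomainRingHom, AddMonoidAlgebra.mapDomain_single]

theorem walkGF_mul (S : Finset Pt) (f : Pt →+ G) {Φ Φ₁ Φ₂ : List Pt → Prop}
    (h : IsUniqueConcat Φ Φ₁ Φ₂) : walkGF S f Φ = walkGF S f Φ₁ * walkGF S f Φ₂ := by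
  ext n : 1
  simp only [coeff_mul, walkGF, coeff_mk, Finset.sum_mul_sum, AddMonoidAlgebra.single_mul_single,
    mul_one, ← map_add, ← List.sum_append]
  simp only [← Finset.sum_product']
  rw [Finset.sum_sigma']
  symm
  refine Finset.sum_bij (fun x _ => x.2.1 ++ x.2.2) ?_ ?_ ?_ fun _ _ => rfl
  · rintro ⟨⟨i, j⟩, p, q⟩ hx
    simp only [Finset.mem_sigma, Finset.mem_product, Finset.mem_filter,
      Finset.HasAntidiagonal.mem_antidiagonal, mem_walksOfLength] at hx ⊢
    obtain ⟨rfl, ⟨⟨rfl, hpS⟩, hp⟩, ⟨rfl, hqS⟩, hq⟩ := hx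
    exact ⟨⟨by simp, stepsIn_append.2 ⟨hpS, hqS⟩⟩, (h.iff_exists _).2 ⟨p, q, hp, hq, rfl⟩⟩
  · rintro ⟨⟨i, j⟩, p, q⟩ hx ⟨⟨i', j'⟩, p', q'⟩ hx' heq
    simp only [Finset.mem_sigma, Finset.mem_product, Finset.mem_filter,
      Finset.HasAntidiagonal.mem_antidiagonal, mem_walksOfLength] at hx hx'
    obtain ⟨-, ⟨⟨rfl, -⟩, hp⟩, ⟨rfl, -⟩, hq⟩ := hx
    obtain ⟨-, ⟨⟨rfl, -⟩, hp'⟩, ⟨rfl, -⟩, hq'⟩ := hx'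
    obtain rfl := h.left_unique hp hq hp' hq' heq
    obtain rfl := List.append_cancel_left heq
    rfl
  · intro l hl
    rw [Finset.mem_filter, mem_walksOfLength, h.iff_exists] at hl
    obtain ⟨⟨hl, hlS⟩, p, q, hp, hq, rfl⟩ := hl
    refine ⟨⟨(p.length, q.length), p, q⟩, ?_, rfl⟩
    rw [stepsIn_append] at hlS
    simpa [mem_walksOfLength, hlS, hp, hq] using hl

theorem eq_walkGF_of_coeff {S : Finset Pt} {f : Pt →+ G} {Φ : List Pt → Prop}
    {F : PowerSeries (AddMonoidAlgebra ℝ G)}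
    (h : ∀ n e, (coeff n F).coeff e
      = ({l : List Pt | l.length = n ∧ StepsIn S l ∧ Φ l ∧ f l.sum = e}.ncard : ℝ)) :
    F = walkGF S f Φ := by
  ext n e
  rw [h, coeff_coeff_walkGF]

theorem coeff_succ_walkGF_true (S : Finset Pt) (f : Pt →+ G) (n : ℕ) :
    coeff (n + 1) (walkGF S f fun _ => True)
      = (∑ s ∈ S, AddMonoidAlgebra.single (f s) 1) * coeff n (walkGF S f fun _ => True) := by
  have hcons : Set.InjOn (fun x : Pt × List Pt => x.1 :: x.2) ↑(S ×ˢ walksOfLength S n) :=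
    fun x _ y _ h => Prod.ext (List.cons.inj h).1 (List.cons.inj h).2
  simp only [walkGF, coeff_mk, Finset.filter_true, walksOfLength, Finset.sum_image hcons,
    Finset.sum_product, Finset.sum_mul_sum, AddMonoidAlgebra.single_mul_single, List.sum_cons,
    map_add, mul_one]

theorem Kpoly_mul_walkGF_true (S : Finset Pt) :
    Kpoly S * walkGF S (AddMonoidHom.id Pt) (fun _ => True) = 1 := by
  ext1 n
  cases n with
  | zero =>
    have h := coeff_zero_walkGF S (AddMonoidHom.id Pt) (Φ := fun _ => True) trivial
    rw [coeff_zero_eq_constantCoeff_apply] at h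
    simp [Kpoly, h]
  | succ n =>
    rw [Kpoly, sub_mul, one_mul, mul_assoc, map_sub, coeff_succ_X_mul, coeff_C_mul,
      coeff_succ_walkGF_true]
    simp

noncomputable def loopGF (S : Finset Pt) : PowerSeries ℝ := mk fun n => (loopCount S n : ℝ)

theorem coeff_loopGF (S : Finset Pt) (n : ℕ) :
    coeff n (loopGF S) = ((walksOfLength S n).filter IsLoop).card := by
  rw [loopGF, coeff_mk, loopCount, ← ncard_walks_eq_card]
  rfl

theorem map_loopGF (S : Finset Pt) (f : Pt →+ G) :
    map (algebraMap ℝ (AddMonoidAlgebra ℝ G)) (loopGF S) = walkGF S f IsLoop := by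
  ext1 n
  have hsum : ∀ l ∈ (walksOfLength S n).filter IsLoop,
      AddMonoidAlgebra.single (f l.sum) (1 : ℝ) = AddMonoidAlgebra.single 0 1 := fun l hl => by
    rw [(Finset.mem_filter.1 hl).2.2, Prod.mk_zero_zero, map_zero]
  rw [coeff_map, coeff_loopGF, walkGF, coeff_mk, Finset.sum_congr rfl hsum, Finset.sum_const,
    AddMonoidAlgebra.smul_single, AddMonoidAlgebra.coe_algebraMap]
  simp

theorem isLoop_nil : IsLoop [] :=
  ⟨fun i hi => by simp [Nat.le_zero.1 hi, vert_zero, OnNegAxis], rfl⟩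

theorem avoidsH_nil : AvoidsH [] := fun _ h₁ h₂ => by simp at h₂; omega

theorem endsStrictlyLeftmost_nil : EndsStrictlyLeftmost [] := ⟨rfl, fun _ h => by simp at h⟩

theorem isCanonicalFactorization_walkGF (S : Finset Pt) :
    IsCanonicalFactorization (walkGF S (AddMonoidHom.fst ℤ ℤ) IsBilateral) (loopGF S)
      (walkGF S (AddMonoidHom.fst ℤ ℤ) fun l => AvoidsH l ∧ IsBilateral l)
      (walkGF S (AddMonoidHom.fst ℤ ℤ) EndsStrictlyLeftmost) := by
  have hfirst := walkGF_mul S (AddMonoidHom.fst ℤ ℤ)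
    (isUniqueConcat_leftmost.and fun p q hp => isBilateral_append_iff hp.1 q)
  have hloop := walkGF_mul S (AddMonoidHom.fst ℤ ℤ)
    (isUniqueConcat_loop.and fun p q hp => isBilateral_append_iff hp.isBilateral q)
  simp only [true_and] at hfirst
  refine ⟨?_, fun n i hi => coeff_coeff_walkGF_eq_zero fun l hl _ => ?_,
    fun n i hi => coeff_coeff_walkGF_eq_zero fun l hl _ => ?_, ?_,
    coeff_zero_walkGF _ _ ⟨avoidsH_nil, rfl⟩, coeff_zero_walkGF _ _ endsStrictlyLeftmost_nil,
    fun n hn => coeff_coeff_walkGF_eq_zero fun l hl hln => ?_,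
    fun n hn => coeff_coeff_walkGF_eq_zero fun l hl hln => ?_⟩
  · rw [hfirst, hloop, map_loopGF S (AddMonoidHom.fst ℤ ℤ)]
    ring
  · rcases eq_or_ne l [] with rfl | hne
    · simpa using hi.ne'
    · exact (hi.trans (hl.1.sum_fst_pos hl.2 hne)).ne'
  · rcases eq_or_ne l [] with rfl | hne
    · simpa using hi.ne
    · exact ((hl.sum_fst_neg hne).trans hi).ne
  · simp [coeff_loopGF, walksOfLength, Finset.filter_singleton, isLoop_nil]
  · exact (hl.1.sum_fst_pos hl.2 (List.ne_nil_of_length_pos (hln ▸ hn))).ne'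
  · exact (hl.sum_fst_neg (List.ne_nil_of_length_pos (hln ▸ hn))).ne

theorem Kpoly_mul_walkGF_mul_loopGF_mul_walkGF (S : Finset Pt) :
    Kpoly S * walkGF S (AddMonoidHom.id Pt) AvoidsH * map (algebraMap ℝ E2) (loopGF S)
      * map iotaX (walkGF S (AddMonoidHom.fst ℤ ℤ) EndsStrictlyLeftmost) = 1 := by
  have hleft : map iotaX (walkGF S (AddMonoidHom.fst ℤ ℤ) EndsStrictlyLeftmost)
      = walkGF S (AddMonoidHom.id Pt) EndsStrictlyLeftmost := by
    rw [iotaX, map_walkGF]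
    exact walkGF_congr fun l hl => Prod.ext rfl hl.1.symm
  rw [hleft, map_loopGF S (AddMonoidHom.id Pt), ← Kpoly_mul_walkGF_true S,
    walkGF_mul _ _ isUniqueConcat_leftmost, walkGF_mul _ _ isUniqueConcat_loop]
  ring

end GeneratingFunctions

/-- the complete solution: if `(B₀, B₊, B₋)` is the canonical
factorization of the generating function `B` of bilateral walks, then `L = B₀`,
`S₀ = B₊`, and `K(x,y;t) S(x,y;t) B₀(t) B₋(x⁻¹;t) = 1`. -/
theorem statement9 (S : Finset Pt)
    (B Bp Bm : PowerSeries E1) (B0 : PowerSeries ℝ)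
    (Sgf : PowerSeries E2) (S0 : PowerSeries E1) (L : PowerSeries ℝ)
    (hB : ∀ (n : ℕ) (i : ℤ),
      (PowerSeries.coeff (R := E1) n B).coeff i = (walkCount S n (i, 0) : ℝ))
    (hfact : IsCanonicalFactorization B B0 Bp Bm)
    (hS : ∀ (n : ℕ) (e : Pt),
      (PowerSeries.coeff (R := E2) n Sgf).coeff e = (slitCount S n e : ℝ))
    (hS0 : ∀ (n : ℕ) (i : ℤ),
      (PowerSeries.coeff (R := E1) n S0).coeff i = (slitCount S n (i, 0) : ℝ))
    (hL : ∀ n : ℕ, PowerSeries.coeff (R := ℝ) n L = (loopCount S n : ℝ)) :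
    L = B0 ∧ S0 = Bp ∧
    Kpoly S * Sgf * PowerSeries.map (algebraMap ℝ E2) B0
      * PowerSeries.map iotaX Bm = 1 := by
  have hBgf : B = walkGF S (AddMonoidHom.fst ℤ ℤ) IsBilateral :=
    eq_walkGF_of_coeff fun n i => by
      rw [hB, walkCount]
      congr 2
      ext l
      simp only [Set.mem_ofPred_eq, IsBilateral, Prod.ext_iff, AddMonoidHom.coe_fst]
      tauto
  have hS0gf : S0 = walkGF S (AddMonoidHom.fst ℤ ℤ) fun l => AvoidsH l ∧ IsBilateral l :=
    eq_walkGF_of_coeff fun n i => by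
      rw [hS0, slitCount]
      congr 2
      ext l
      simp only [Set.mem_ofPred_eq, IsBilateral, Prod.ext_iff, AddMonoidHom.coe_fst]
      tauto
  have hSgf : Sgf = walkGF S (AddMonoidHom.id Pt) AvoidsH := eq_walkGF_of_coeff fun n e => hS n e
  have hLgf : L = loopGF S := ext fun n => by rw [hL, loopGF, coeff_mk]
  obtain ⟨h0, hp, hm⟩ := hfact.unique (hBgf ▸ isCanonicalFactorization_walkGF S)
  refine ⟨hLgf.trans h0.symm, hS0gf.trans hp.symm, ?_⟩
  rw [hSgf, h0, hm]
  exact Kpoly_mul_walkGF_mul_loopGF_mul_walkGF S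

end SlitPlane
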